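/- Let s ≥ 9 and suppose real numbers (d, m1, ..., ms) with d > 0 satisfy d² = Σmᵢ², 3d = Σmᵢ, m1 ≥ ... ≥ ms ≥ 0, and d ≥ m1 + m2 + m3. Then, after normalizing d = 1, one has A := m1 + m2 + m3 = 1 and m1 = m2 = m3 = m4 = 1/3. -/
import Mathlib

set_option maxHeartbeats 800000

/-- Intermediate step: under the classification hypotheses, after normalizing d = 1,
one has A = m1 + m2 + m3 = 1 and m1 = m2 = m3 = m4 = 1/3. -/
theorem stmt_4 (s : ℕ) (hs : 9 ≤ s) (d : ℝ) (m : Fin s → ℝ)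
    (hd : 0 < d) (hnorm : d = 1)
    (h1 : d ^ 2 = ∑ i, (m i) ^ 2) (h2 : 3 * d = ∑ i, m i)
    (hmono : ∀ i j : Fin s, i ≤ j → m j ≤ m i) (hnn : ∀ i, 0 ≤ m i)
    (hred : m ⟨0, by omega⟩ + m ⟨1, by omega⟩ + m ⟨2, by omega⟩ ≤ d) :
    m ⟨0, by omega⟩ + m ⟨1, by omega⟩ + m ⟨2, by omega⟩ = 1 ∧
    m ⟨0, by omega⟩ = 1 / 3 ∧ m ⟨1, by omega⟩ = 1 / 3 ∧
    m ⟨2, by omega⟩ = 1 / 3 ∧ m ⟨3, by omega⟩ = 1 / 3 := by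
  classical
  subst hnorm
  set i0 : Fin s := ⟨0, by omega⟩ with hi0
  set i1 : Fin s := ⟨1, by omega⟩ with hi1
  set i2 : Fin s := ⟨2, by omega⟩ with hi2
  set i3 : Fin s := ⟨3, by omega⟩ with hi3
  set R : Finset (Fin s) := Finset.univ.filter (fun i : Fin s => ¬ (i : ℕ) < 3) with hR
  have hfil : (Finset.univ.filter (fun i : Fin s => (i : ℕ) < 3)) = {i0, i1, i2} := by
    ext i
    simp only [Finset.mem_filter, Finset.mem_univ, true_and, Finset.mem_insert,
      Finset.mem_singleton, Fin.ext_iff, hi0, hi1, hi2]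
    omega
  have h01 : i0 ≠ i1 := by simp [Fin.ext_iff, hi0, hi1]
  have h02 : i0 ≠ i2 := by simp [Fin.ext_iff, hi0, hi2]
  have h12 : i1 ≠ i2 := by simp [Fin.ext_iff, hi1, hi2]
  have hsplit : ∀ f : Fin s → ℝ, (∑ i, f i) = f i0 + f i1 + f i2 + ∑ i ∈ R, f i := by
    intro f
    rw [← Finset.sum_filter_add_sum_filter_not Finset.univ (fun i : Fin s => (i : ℕ) < 3) f,
      hfil]
    rw [Finset.sum_insert (by simp [h01, h02]), Finset.sum_insert (by simp [h12]),
      Finset.sum_singleton]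
    ring
  have hba : (m i1) ≤ (m i0) := hmono i0 i1 (by simp [Fin.le_def, hi0, hi1])
  have hcb : (m i2) ≤ (m i1) := hmono i1 i2 (by simp [Fin.le_def, hi1, hi2])
  have hec : (m i3) ≤ (m i2) := hmono i2 i3 (by simp [Fin.le_def, hi2, hi3])
  have hc0 : 0 ≤ (m i2) := hnn i2
  have he0 : 0 ≤ (m i3) := hnn i3
  have ha0 : 0 ≤ (m i0) := le_trans hc0 (le_trans hcb hba)
  have hT : ∑ i ∈ R, m i = 3 - ((m i0) + (m i1) + (m i2)) := by
    have := hsplit m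
    linarith [h2]
  have hQ : ∑ i ∈ R, (m i) ^ 2 = 1 - ((m i0) ^ 2 + (m i1) ^ 2 + (m i2) ^ 2) := by
    have := hsplit (fun i => (m i) ^ 2)
    linarith [h1]
  have hle3 : ∀ i ∈ R, m i ≤ (m i3) := by
    intro i hi
    simp only [hR, Finset.mem_filter, Finset.mem_univ, true_and, not_lt] at hi
    exact hmono i3 i (by simp [Fin.le_def, hi3]; omega)
  have hQle : (∑ i ∈ R, (m i) ^ 2) ≤ (m i3) * ∑ i ∈ R, m i := by
    rw [Finset.mul_sum]
    apply Finset.sum_le_sum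
    intro i hi
    have h3i : m i ≤ (m i3) := hle3 i hi
    nlinarith [hnn i]
  have hAle : (m i0) + (m i1) + (m i2) ≤ 1 := hred
  have h3AM : (0 : ℝ) ≤ 3 - ((m i0) + (m i1) + (m i2)) := by linarith
  -- cross-term lower bound: (m i2)*((m i0)+(m i1)+(m i2)) ≤ ab+ac+bc
  have hcr : (m i2) * ((m i0) + (m i1) + (m i2)) ≤ (m i0) * (m i1) + (m i0) * (m i2) + (m i1) * (m i2) := by
    nlinarith [mul_nonneg ha0 (sub_nonneg.2 hcb), mul_nonneg hc0 (sub_nonneg.2 (le_trans hcb hba))]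
  have hQc : (∑ i ∈ R, (m i) ^ 2) ≤ (m i2) * (3 - ((m i0) + (m i1) + (m i2))) := by
    calc (∑ i ∈ R, (m i) ^ 2) ≤ (m i3) * ∑ i ∈ R, m i := hQle
      _ = (m i3) * (3 - ((m i0) + (m i1) + (m i2))) := by rw [hT]
      _ ≤ (m i2) * (3 - ((m i0) + (m i1) + (m i2))) := mul_le_mul_of_nonneg_right hec h3AM
  -- First: A = (m i0) + (m i1) + (m i2) = 1
  have hA1 : (m i0) + (m i1) + (m i2) = 1 := by
    have key : (1 : ℝ) ≤ (m i0) + (m i1) + (m i2) := by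
      nlinarith [hQ, hQc, hcr,
        mul_nonneg (sub_nonneg.2 hAle) (sub_nonneg.2 (by linarith : 3 * (m i2) ≤ (m i0) + (m i1) + (m i2)))]
    linarith
  have hT2 : ∑ i ∈ R, m i = 2 := by rw [hT, hA1]; norm_num
  have hQ2 : ∑ i ∈ R, (m i) ^ 2 = 2 * ((m i0) * (m i1) + (m i0) * (m i2) + (m i1) * (m i2)) := by
    have hsq : (m i0) ^ 2 + (m i1) ^ 2 + (m i2) ^ 2 + 2 * ((m i0) * (m i1) + (m i0) * (m i2) + (m i1) * (m i2)) = 1 := by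
      nlinarith [hA1]
    linarith [hQ]
  have hQe : 2 * ((m i0) * (m i1) + (m i0) * (m i2) + (m i1) * (m i2)) ≤ 2 * (m i3) := by
    rw [← hQ2]
    calc (∑ i ∈ R, (m i) ^ 2) ≤ (m i3) * ∑ i ∈ R, m i := hQle
      _ = 2 * (m i3) := by rw [hT2]; ring
  have hcA : (m i2) * ((m i0) + (m i1) + (m i2)) = (m i2) := by rw [hA1]; ring
  -- ab ≤ (m i2)², and with ordering this forces the equalities below
  have habc2 : (m i0) * (m i1) ≤ (m i2) ^ 2 := by nlinarith [hQe, hec, hcA]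
  have t1 : (m i0) * ((m i1) - (m i2)) = 0 := by
    have hnn1 : 0 ≤ (m i0) * ((m i1) - (m i2)) := mul_nonneg ha0 (by linarith)
    have hnn2 : 0 ≤ (m i2) * ((m i0) - (m i2)) := mul_nonneg hc0 (by linarith)
    nlinarith [habc2]
  have t2 : (m i2) * ((m i0) - (m i2)) = 0 := by
    have hnn1 : 0 ≤ (m i0) * ((m i1) - (m i2)) := mul_nonneg ha0 (by linarith)
    have hnn2 : 0 ≤ (m i2) * ((m i0) - (m i2)) := mul_nonneg hc0 (by linarith)
    nlinarith [habc2]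
  rcases eq_or_lt_of_le hc0 with hc | hc
  · -- (m i2) = 0 : contradiction, since then m i ≤ (m i3) = 0 for i ∈ R but their sum is 2
    exfalso
    have he : (m i3) = 0 := le_antisymm (by linarith) he0
    have hnp : (∑ i ∈ R, m i) ≤ 0 := Finset.sum_nonpos fun i hi => by
      have := hle3 i hi; linarith
    linarith
  · -- (m i2) > 0
    have hac : (m i0) = (m i2) := by
      rcases mul_eq_zero.1 t2 with h | h
      · linarith
      · linarith
    have hbc : (m i1) = (m i2) := le_antisymm (by linarith) hcb
    have hc3 : (m i2) = 1 / 3 := by rw [hac, hbc] at hA1; linarith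
    have he3 : (m i3) = 1 / 3 := by
      have hcross : 2 * ((m i0) * (m i1) + (m i0) * (m i2) + (m i1) * (m i2)) = 2 / 3 := by
        rw [hac, hbc, hc3]; norm_num
      have he' : 1 / 3 ≤ (m i3) := by linarith [hQe]
      linarith
    exact ⟨hA1, by rw [hac]; exact hc3, by rw [hbc]; exact hc3, hc3, he3⟩
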